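/- Let q be a prime, let 2 ≤ y < q, let x ≥ 1 be real, and let w : ℕ → ℝ be a nonnegative completely multiplicative function supported on y-friable integers (w(p) = 0 for all primes p > y) with ∑_{a ≥ 1} w(a) < ∞. For each Dirichlet character χ mod q set R(χ) = ∑_{a ≥ 1} w(a) χ(a). Then S₁ := ∑_{χ mod q} (∑_{n ≤ x} χ(n)) · |R(χ)|² is a nonnegative real number and S₁ ≥ (∑_{n ∈ S(x,y)} w(n)) · ∑_{χ mod q} |R(χ)|². -/

import Mathlib

open Finset

open scoped Classical in
/-- The set of `y`-friable (smooth) positive integers `n ≤ x`. -/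
noncomputable def smoothSet (x y : ℝ) : Finset ℕ :=
  (Finset.Icc 1 ⌊x⌋₊).filter (fun n => ∀ p : ℕ, p.Prime → p ∣ n → (p : ℝ) ≤ y)


theorem resonance_S1_lower_bound (q : ℕ) (hq : q.Prime) (y : ℝ) (hy : 2 ≤ y)
    (hyq : y < q) (x : ℝ) (hx : 1 ≤ x) (w : ℕ → ℝ)
    (hw0 : ∀ n, 0 ≤ w n) (hw1 : w 1 = 1)
    (hmul : ∀ m n : ℕ, 1 ≤ m → 1 ≤ n → w (m * n) = w m * w n)
    (hsupp : ∀ p : ℕ, p.Prime → y < (p : ℝ) → w p = 0)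
    (hsum : Summable w)
    (R : DirichletCharacter ℂ q → ℂ)
    (hR : ∀ χ : DirichletCharacter ℂ q, R χ = ∑' a : ℕ, (w a : ℂ) * χ (a : ZMod q))
    (S₁ : ℂ)
    (hS₁ : S₁ = ∑ χ : DirichletCharacter ℂ q,
        (∑ n ∈ Finset.Icc 1 ⌊x⌋₊, χ (n : ZMod q)) * ((‖R χ‖) ^ 2 : ℝ)) :
    S₁.im = 0 ∧
      (∑ n ∈ smoothSet x y, w n) *
          (∑ χ : DirichletCharacter ℂ q, (‖R χ‖) ^ 2) ≤ S₁.re := by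
  classical
  haveI : Fact q.Prime := ⟨hq⟩
  haveI : NeZero q := ⟨hq.ne_zero⟩
  set K : ℝ := (q.totient : ℝ) with hK
  have hK0 : 0 ≤ K := by positivity
  set C : ℕ → ℕ × ℕ → Prop :=
    fun n p => IsUnit ((p.2 : ZMod q)) ∧ ((n : ZMod q) * (p.1 : ZMod q) = (p.2 : ZMod q))
    with hC
  set g : ℕ → ℕ × ℕ → ℝ := fun n p => if C n p then w p.1 * w p.2 else 0 with hg
  have hW : Summable (fun p : ℕ × ℕ => w p.1 * w p.2) :=
    hsum.mul_of_nonneg hsum hw0 hw0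
  have hg0 : ∀ n p, 0 ≤ g n p := by
    intro n p
    simp only [hg]
    split
    · exact mul_nonneg (hw0 _) (hw0 _)
    · exact le_rfl
  have hgle : ∀ n p, g n p ≤ w p.1 * w p.2 := by
    intro n p
    simp only [hg]
    split
    · exact le_rfl
    · exact mul_nonneg (hw0 _) (hw0 _)
  have hgsum : ∀ n, Summable (g n) := fun n =>
    hW.of_nonneg_of_le (hg0 n) (hgle n)
  set t : ℕ → ℝ := fun n => ∑' p, g n p with htdef
  have ht0 : ∀ n, 0 ≤ t n := fun n => tsum_nonneg (hg0 n)
  -- summability of character twisted series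
  have hsummc : ∀ χ : DirichletCharacter ℂ q,
      Summable (fun a : ℕ => ‖(w a : ℂ) * χ (a : ZMod q)‖) := by
    intro χ
    refine hsum.of_nonneg_of_le (fun a => norm_nonneg _) (fun a => ?_)
    rw [norm_mul, Complex.norm_real, Real.norm_eq_abs, abs_of_nonneg (hw0 a)]
    calc w a * ‖χ (a : ZMod q)‖ ≤ w a * 1 :=
          mul_le_mul_of_nonneg_left (χ.norm_le_one _) (hw0 a)
      _ = w a := mul_one _
  have hsummc' : ∀ χ : DirichletCharacter ℂ q,
      Summable (fun a : ℕ => ‖(w a : ℂ) * star (χ (a : ZMod q))‖) := by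
    intro χ
    simpa only [norm_mul, norm_star] using hsummc χ
  -- orthogonality
  have orth : ∀ c b : ZMod q,
      (∑ χ : DirichletCharacter ℂ q, χ c * star (χ b)) =
        if IsUnit b ∧ c = b then (K : ℂ) else 0 := by
    intro c b
    by_cases hb : IsUnit b
    · have : ∀ χ : DirichletCharacter ℂ q, χ c * star (χ b) = χ (c * b⁻¹) := by
        intro χ
        rw [MulChar.star_apply', MulChar.inv_apply', map_mul]
      simp_rw [this]
      rw [DirichletCharacter.sum_characters_eq]
      have hiff : c * b⁻¹ = 1 ↔ (IsUnit b ∧ c = b) := by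
        rw [mul_comm, ZMod.inv_mul_eq_one_of_isUnit hb]
        exact ⟨fun h => ⟨hb, h.symm⟩, fun h => h.2.symm⟩
      rw [if_congr hiff rfl rfl, hK]
      push_cast
      rfl
    · have h0 : ∀ χ : DirichletCharacter ℂ q, χ b = 0 :=
        fun χ => χ.map_nonunit hb
      have : ¬ (IsUnit b ∧ c = b) := fun h => hb h.1
      rw [if_neg this]
      simp [h0]
  -- the key identity
  have key : ∀ n : ℕ,
      (∑ χ : DirichletCharacter ℂ q,
        χ ((n : ZMod q)) * ((‖R χ‖) ^ 2 : ℝ)) = ((K * t n : ℝ) : ℂ) := by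
    intro n
    have step : ∀ χ : DirichletCharacter ℂ q,
        χ ((n : ZMod q)) * ((‖R χ‖) ^ 2 : ℝ) =
          ∑' p : ℕ × ℕ, (w p.1 * w p.2 : ℝ) *
            (χ (((n : ZMod q) * (p.1 : ZMod q))) * star (χ (p.2 : ZMod q))) := by
      intro χ
      have habs : (((‖R χ‖) ^ 2 : ℝ) : ℂ) = R χ * star (R χ) := by
        rw [show ((‖R χ‖) ^ 2 : ℝ) = Complex.normSq (R χ) from Complex.sq_norm _]
        rw [RCLike.star_def, Complex.mul_conj]
      have hstar : star (R χ) = ∑' b : ℕ, (w b : ℂ) * star (χ (b : ZMod q)) := by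
        rw [hR, tsum_star]
        congr 1
        funext b
        rw [star_mul', Complex.star_def, Complex.conj_ofReal]
      have hprod : R χ * star (R χ) =
          ∑' p : ℕ × ℕ, ((w p.1 : ℂ) * χ (p.1 : ZMod q)) *
            ((w p.2 : ℂ) * star (χ (p.2 : ZMod q))) := by
        rw [hstar, hR]
        exact tsum_mul_tsum_of_summable_norm (hsummc χ) (hsummc' χ)
      rw [habs, hprod, ← tsum_mul_left]
      congr 1
      funext p
      rw [map_mul]
      push_cast
      ring
    simp_rw [step]
    have hsF : ∀ χ : DirichletCharacter ℂ q,
        Summable (fun p : ℕ × ℕ => ((w p.1 * w p.2 : ℝ) : ℂ) *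
          (χ (((n : ZMod q) * (p.1 : ZMod q))) * star (χ (p.2 : ZMod q)))) := by
      intro χ
      apply Summable.of_norm
      refine hW.of_nonneg_of_le (fun p => norm_nonneg _) (fun p => ?_)
      rw [norm_mul, norm_mul, norm_star, Complex.norm_real, Real.norm_eq_abs,
        abs_of_nonneg (mul_nonneg (hw0 _) (hw0 _))]
      calc w p.1 * w p.2 * (‖χ ((n : ZMod q) * (p.1 : ZMod q))‖ * ‖χ (p.2 : ZMod q)‖)
          ≤ w p.1 * w p.2 * (1 * 1) := by
            refine mul_le_mul_of_nonneg_left ?_ (mul_nonneg (hw0 _) (hw0 _))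
            exact mul_le_mul (χ.norm_le_one _) (χ.norm_le_one _) (norm_nonneg _) zero_le_one
        _ = w p.1 * w p.2 := by ring
    rw [← Summable.tsum_finsetSum (fun χ _ => hsF χ)]
    have : ∀ p : ℕ × ℕ,
        (∑ χ : DirichletCharacter ℂ q, ((w p.1 * w p.2 : ℝ) : ℂ) *
          (χ (((n : ZMod q) * (p.1 : ZMod q))) * star (χ (p.2 : ZMod q)))) =
        (K : ℂ) * ((g n p : ℝ) : ℂ) := by
      intro p
      rw [← Finset.mul_sum, orth]
      simp only [hg, hC]
      by_cases hc : IsUnit ((p.2 : ℕ) : ZMod q) ∧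
          ((n : ZMod q) * ((p.1 : ℕ) : ZMod q) = ((p.2 : ℕ) : ZMod q))
      · simp only [if_pos hc]
        push_cast
        ring
      · simp only [if_neg hc]
        simp
    simp_rw [this]
    rw [tsum_mul_left]
    have : ∑' p : ℕ × ℕ, ((g n p : ℝ) : ℂ) = ((t n : ℝ) : ℂ) := by
      rw [htdef, Complex.ofReal_tsum]
    rw [this]
    push_cast
    ring
  -- compute S₁
  have hS₁' : S₁ = ((∑ n ∈ Finset.Icc 1 ⌊x⌋₊, K * t n : ℝ) : ℂ) := by
    rw [hS₁]
    have : ∀ χ : DirichletCharacter ℂ q,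
        (∑ n ∈ Finset.Icc 1 ⌊x⌋₊, χ (n : ZMod q)) * ((‖R χ‖) ^ 2 : ℝ) =
        ∑ n ∈ Finset.Icc 1 ⌊x⌋₊, χ (n : ZMod q) * ((‖R χ‖) ^ 2 : ℝ) := by
      intro χ; rw [Finset.sum_mul]
    simp_rw [this]
    rw [Finset.sum_comm]
    simp_rw [key]
    rw [Complex.ofReal_sum]
  have him : S₁.im = 0 := by rw [hS₁', Complex.ofReal_im]
  have hre : S₁.re = ∑ n ∈ Finset.Icc 1 ⌊x⌋₊, K * t n := by
    rw [hS₁', Complex.ofReal_re]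
  -- the sum of |R χ|²
  have hRsum : (∑ χ : DirichletCharacter ℂ q, (‖R χ‖) ^ 2) = K * t 1 := by
    have h1 := key 1
    have : (∑ χ : DirichletCharacter ℂ q,
        χ ((1 : ℕ) : ZMod q) * ((‖R χ‖) ^ 2 : ℝ)) =
        ((∑ χ : DirichletCharacter ℂ q, (‖R χ‖) ^ 2 : ℝ) : ℂ) := by
      rw [Complex.ofReal_sum]
      congr 1
      funext χ
      rw [Nat.cast_one, map_one, one_mul]
    rw [this] at h1
    exact_mod_cast h1
  refine ⟨him, ?_⟩
  rw [hre, hRsum]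
  -- per-n inequality
  have hpern : ∀ n ∈ smoothSet x y, w n * t 1 ≤ t n := by
    intro n hn
    rw [smoothSet, Finset.mem_filter] at hn
    obtain ⟨hn1, hnf⟩ := hn
    have hn1' : 1 ≤ n := (Finset.mem_Icc.mp hn1).1
    have hqn : ¬ q ∣ n := fun hd => absurd (hnf q hq hd) (not_le.mpr hyq)
    have hnu : IsUnit ((n : ZMod q)) :=
      (ZMod.isUnit_iff_coprime n q).mpr
        (Nat.coprime_comm.mp (hq.coprime_iff_not_dvd.mpr hqn))
    have hinj : Function.Injective (fun p : ℕ × ℕ => (p.1, n * p.2)) := by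
      intro p1 p2 h
      simp only [Prod.mk.injEq] at h
      have := Nat.eq_of_mul_eq_mul_left (Nat.lt_of_lt_of_le Nat.zero_lt_one hn1') h.2
      exact Prod.ext h.1 this
    have hle : ∀ p : ℕ × ℕ, w n * g 1 p ≤ g n (p.1, n * p.2) := by
      intro p
      by_cases hc : C 1 p
      · have hp2 : 1 ≤ p.2 := by
          rcases Nat.eq_zero_or_pos p.2 with h0 | h
          · exfalso
            have := hc.1
            rw [h0] at this
            simp at this
          · exact h
        have hcn : C n (p.1, n * p.2) := by
          constructor
          · show IsUnit (((n * p.2 : ℕ) : ZMod q))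
            push_cast
            exact hnu.mul hc.1
          · show (n : ZMod q) * ((p.1 : ℕ) : ZMod q) = ((n * p.2 : ℕ) : ZMod q)
            have h2 := hc.2
            push_cast at h2 ⊢
            rw [one_mul] at h2
            rw [h2]
        have : g n (p.1, n * p.2) = w p.1 * w (n * p.2) := by
          simp only [hg, if_pos hcn]
        rw [this, hmul n p.2 hn1' hp2]
        have : g 1 p = w p.1 * w p.2 := by simp only [hg, if_pos hc]
        rw [this]
        ring_nf
        exact le_rfl
      · have : g 1 p = 0 := by simp only [hg, if_neg hc]
        rw [this, mul_zero]
        exact hg0 n _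
    calc w n * t 1 = ∑' p, w n * g 1 p := by
          rw [htdef, tsum_mul_left]
      _ ≤ t n := by
          refine (((hgsum 1)).mul_left _).tsum_le_tsum_of_inj _ hinj (fun c _ => hg0 n c) hle
            (hgsum n)
  -- assemble
  have hsub : smoothSet x y ⊆ Finset.Icc 1 ⌊x⌋₊ := Finset.filter_subset _ _
  calc (∑ n ∈ smoothSet x y, w n) * (K * t 1)
      = K * ∑ n ∈ smoothSet x y, w n * t 1 := by
        rw [Finset.sum_mul, Finset.mul_sum]
        exact Finset.sum_congr rfl fun i _ => by ring
    _ ≤ K * ∑ n ∈ smoothSet x y, t n := by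
        refine mul_le_mul_of_nonneg_left (Finset.sum_le_sum hpern) hK0
    _ ≤ K * ∑ n ∈ Finset.Icc 1 ⌊x⌋₊, t n := by
        refine mul_le_mul_of_nonneg_left
          (Finset.sum_le_sum_of_subset_of_nonneg hsub (fun i _ _ => ht0 i)) hK0
    _ = ∑ n ∈ Finset.Icc 1 ⌊x⌋₊, K * t n := by rw [Finset.mul_sum]
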